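/- arXiv:1408.6701 — 5 statements merged into one kernel-verified Lean document; each statement's English description precedes it below -/
import Mathlib

section
/- Let n ∈ ℕ and consider the two configurations x⁰, x¹ ∈ {0,1}^{ℤ²} defined by x^i_{(0,0)} = x^i_{(n,i)} = 1 and x^i_v = 0 elsewhere. Then every pattern with domain [0,n-1]² occurs in x⁰ if and only if it occurs in x¹. -/
/-!
The two ones of `xⁱ` lie `n` columns apart, so an `n × n` window sees at most one of them.
A window starting in a column `≤ 0` misses `(n, i)` and reads the same in `x⁰` and `x¹`;
any other window misses the origin, and moving it up or down by one row turns what it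
reads in one configuration into what it reads in the other.
-/

theorem exists_square_pattern_two_points_of_row_change (n : ℕ) {m : ℤ} (hm : n ≤ m) (b c : ℤ)
    (P : Fin n × Fin n → Bool) :
    (∃ v : ℤ × ℤ, ∀ u : Fin n × Fin n,
        (decide ((v.1 + (u.1 : ℤ), v.2 + (u.2 : ℤ)) = ((0 : ℤ), (0 : ℤ)) ∨
                 (v.1 + (u.1 : ℤ), v.2 + (u.2 : ℤ)) = (m, b))) = P u) →
    ∃ v : ℤ × ℤ, ∀ u : Fin n × Fin n,
        (decide ((v.1 + (u.1 : ℤ), v.2 + (u.2 : ℤ)) = ((0 : ℤ), (0 : ℤ)) ∨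
                 (v.1 + (u.1 : ℤ), v.2 + (u.2 : ℤ)) = (m, c))) = P u := by
  rintro ⟨v, hv⟩
  have hu (u : Fin n × Fin n) : (0 : ℤ) ≤ u.1 ∧ (u.1 : ℤ) < n :=
    ⟨Int.natCast_nonneg _, by exact_mod_cast u.1.isLt⟩
  rcases le_or_gt v.1 0 with hleft | hright
  · refine ⟨v, fun u => ?_⟩
    rw [← hv u, decide_eq_decide]
    simp only [Prod.mk.injEq]
    have := hu u
    omega
  · refine ⟨(v.1, v.2 - b + c), fun u => ?_⟩
    rw [← hv u, decide_eq_decide]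
    simp only [Prod.mk.injEq]
    have := hu u
    omega

/-- The configurations x⁰ (ones at (0,0) and (n,0)) and x¹ (ones at (0,0) and (n,1))
contain exactly the same patterns of domain [0,n-1]². -/
theorem same_square_patterns (n : ℕ) (P : Fin n × Fin n → Bool) :
    (∃ v : ℤ × ℤ, ∀ u : Fin n × Fin n,
        (decide ((v.1 + (u.1 : ℤ), v.2 + (u.2 : ℤ)) = ((0 : ℤ), (0 : ℤ)) ∨
                 (v.1 + (u.1 : ℤ), v.2 + (u.2 : ℤ)) = ((n : ℤ), (0 : ℤ)))) = P u) ↔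
    (∃ v : ℤ × ℤ, ∀ u : Fin n × Fin n,
        (decide ((v.1 + (u.1 : ℤ), v.2 + (u.2 : ℤ)) = ((0 : ℤ), (0 : ℤ)) ∨
                 (v.1 + (u.1 : ℤ), v.2 + (u.2 : ℤ)) = ((n : ℤ), (1 : ℤ)))) = P u) :=
  ⟨exists_square_pattern_two_points_of_row_change n le_rfl 0 1 P,
    exists_square_pattern_two_points_of_row_change n le_rfl 1 0 P⟩
end

section
/- Let W = { v ∈ ℤ^d : ‖v‖ ≤ p } for some p ≥ 1, and let ℤW = { n·w : n ∈ ℤ, w ∈ W }. If d ≥ 2, then there exists an infinite set V ⊆ ℤ^d such that v − w ∉ ℤW + W + W for all distinct v, w ∈ V. -/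
/-!
Take the points `(t, t²)` of a parabola in two coordinates, with `t` running over the positive
multiples of `2p + 1`. If a chord `(D, D * S)`, where `D = t - s` and `S = t + s`, equals
`n • a + e` with `|aᵢ| ≤ p` and `|eᵢ| ≤ 2p`, then either `a₀ = 0`, forcing `|D| ≤ 2p`, or `n`
cancels from the cross product `D * (a₁ - S * a₀) = e₀ * a₁ - e₁ * a₀`, forcing
`|D| * (|S| - p) ≤ 4p²`. The spacing of the parameters `t` rules out both.
-/
theorem abs_le_or_abs_mul_le_of_mem_thickenedLine {p r D S n a₀ a₁ e₀ e₁ : ℤ}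
    (ha₀ : |a₀| ≤ p) (ha₁ : |a₁| ≤ p) (he₀ : |e₀| ≤ r) (he₁ : |e₁| ≤ r)
    (h₀ : D = n * a₀ + e₀) (h₁ : D * S = n * a₁ + e₁) :
    |D| ≤ r ∨ |D| * (|S| - p) ≤ 2 * p * r := by
  rcases eq_or_ne a₀ 0 with rfl | ha₀_ne
  · left
    simpa [h₀] using he₀
  right
  have cross : D * (a₁ - S * a₀) = e₀ * a₁ - e₁ * a₀ := by
    linear_combination a₁ * h₀ - a₀ * h₁
  have hr : 0 ≤ r := (abs_nonneg _).trans he₀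
  have hS : |S| - p ≤ |a₁ - S * a₀| :=
    calc |S| - p ≤ |S| * |a₀| - |a₁| := by
          gcongr
          exact le_mul_of_one_le_right (abs_nonneg _) (Int.one_le_abs ha₀_ne)
      _ ≤ |a₁ - S * a₀| := by
          rw [← abs_mul, abs_sub_comm]
          exact abs_sub_abs_le_abs_sub _ _
  calc |D| * (|S| - p) ≤ |D| * |a₁ - S * a₀| := by gcongr
    _ = |e₀ * a₁ - e₁ * a₀| := by rw [← abs_mul, cross]
    _ ≤ |e₀| * |a₁| + |e₁| * |a₀| := by
          rw [← abs_mul, ← abs_mul]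
          exact abs_sub _ _
    _ ≤ r * p + r * p := by gcongr
    _ = 2 * p * r := by ring

/-- `x ∈ ℤW + W + W`, where `W` is the sup-norm ball of radius `p`. -/
def MemThickenedLines {ι : Type*} (p : ℤ) (x : ι → ℤ) : Prop :=
  ∃ (n : ℤ) (a b c : ι → ℤ), (∀ i, |a i| ≤ p) ∧ (∀ i, |b i| ≤ p) ∧ (∀ i, |c i| ≤ p) ∧
    x = n • a + b + c

section Parabola

variable {ι : Type*} [DecidableEq ι] {i j : ι}

def parabolaPoint (i j : ι) (t : ℤ) : ι → ℤ :=
  Pi.single i t + Pi.single j (t ^ 2)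

theorem parabolaPoint_apply_left (hij : i ≠ j) (t : ℤ) : parabolaPoint i j t i = t := by
  simp [parabolaPoint, hij]

theorem parabolaPoint_apply_right (hij : i ≠ j) (t : ℤ) : parabolaPoint i j t j = t ^ 2 := by
  simp [parabolaPoint, hij.symm]

theorem parabolaPoint_injective (hij : i ≠ j) : Function.Injective (parabolaPoint i j) :=
  fun s t h => by simpa [parabolaPoint_apply_left hij] using congrFun h i

theorem not_memThickenedLines_parabolaPoint_sub (hij : i ≠ j) {p s t : ℤ}
    (hD : 2 * p < |t - s|) (hS : 2 * p * (2 * p) < |t - s| * (|t + s| - p)) :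
    ¬ MemThickenedLines p (parabolaPoint i j t - parabolaPoint i j s) := by
  rintro ⟨n, a, b, c, ha, hb, hc, h⟩
  have hi := congrFun h i
  have hj := congrFun h j
  simp only [Pi.sub_apply, Pi.add_apply, Pi.smul_apply, smul_eq_mul,
    parabolaPoint_apply_left hij, parabolaPoint_apply_right hij] at hi hj
  have hbc (k : ι) : |b k + c k| ≤ 2 * p := (abs_add_le _ _).trans (by linarith [hb k, hc k])
  rcases abs_le_or_abs_mul_le_of_mem_thickenedLine (n := n) (D := t - s) (S := t + s)
    (ha i) (ha j) (hbc i) (hbc j) (by linear_combination hi) (by linear_combination hj)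
    with h | h <;> linarith

theorem not_memThickenedLines_parabolaPoint_sub_of_ne (hij : i ≠ j) {p x y : ℤ} (hp : 0 ≤ p)
    (hx : 0 < x) (hy : 0 < y) (hxy : x ≠ y) :
    ¬ MemThickenedLines p
      (parabolaPoint i j ((2 * p + 1) * x) - parabolaPoint i j ((2 * p + 1) * y)) := by
  have hD : |(2 * p + 1) * x - (2 * p + 1) * y| = (2 * p + 1) * |x - y| := by
    rw [← mul_sub, abs_mul, abs_of_pos (by linarith)]
  have hS : |(2 * p + 1) * x + (2 * p + 1) * y| = (2 * p + 1) * (x + y) := by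
    rw [← mul_add, abs_of_pos (by positivity)]
  have hsub : 1 ≤ |x - y| := Int.one_le_abs (sub_ne_zero.2 hxy)
  have hadd : 3 ≤ x + y := by omega
  apply not_memThickenedLines_parabolaPoint_sub hij <;> rw [hD]
  · nlinarith
  · rw [hS]
    calc 2 * p * (2 * p) < (2 * p + 1) * 1 * (5 * p + 3) := by nlinarith
      _ ≤ (2 * p + 1) * |x - y| * ((2 * p + 1) * (x + y) - p) := by gcongr; nlinarith

end Parabola

theorem infinite_set_avoiding_thickened_lines_general (d p : ℕ) (hd : 2 ≤ d) :
    ∃ V : Set (Fin d → ℤ), V.Infinite ∧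
      ∀ v ∈ V, ∀ w ∈ V, v ≠ w →
        ¬ ∃ (n : ℤ) (a b c : Fin d → ℤ),
            (∀ i, |a i| ≤ (p : ℤ)) ∧ (∀ i, |b i| ≤ (p : ℤ)) ∧ (∀ i, |c i| ≤ (p : ℤ)) ∧
            v - w = n • a + b + c := by
  let i : Fin d := ⟨0, by omega⟩
  let j : Fin d := ⟨1, by omega⟩
  have hij : i ≠ j := by simp [i, j]
  let f (k : ℕ) : Fin d → ℤ := parabolaPoint i j ((2 * p + 1) * (k + 1 : ℤ))
  have hf : f.Injective := fun k m h => by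
    simpa [show (2 * p + 1 : ℤ) ≠ 0 by positivity] using parabolaPoint_injective hij h
  refine ⟨Set.range f, Set.infinite_range_of_injective hf, ?_⟩
  rintro _ ⟨k, rfl⟩ _ ⟨m, rfl⟩ hkm
  exact not_memThickenedLines_parabolaPoint_sub_of_ne hij (by positivity) (by positivity)
    (by positivity) (by simpa using hf.ne_iff.1 hkm)

/-- Let `W = {v ∈ ℤ^d : ‖v‖∞ ≤ p}` and `ℤW = {n • w : n ∈ ℤ, w ∈ W}`. If `d ≥ 2`
then there is an infinite set `V ⊆ ℤ^d` with `v - w ∉ ℤW + W + W` for all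
distinct `v, w ∈ V`. -/
theorem infinite_set_avoiding_thickened_lines (d p : ℕ) (hd : 2 ≤ d) (hp : 1 ≤ p) :
    ∃ V : Set (Fin d → ℤ), V.Infinite ∧
      ∀ v ∈ V, ∀ w ∈ V, v ≠ w →
        ¬ ∃ (n : ℤ) (a b c : Fin d → ℤ),
            (∀ i, |a i| ≤ (p : ℤ)) ∧ (∀ i, |b i| ≤ (p : ℤ)) ∧ (∀ i, |c i| ≤ (p : ℤ)) ∧
            v - w = n • a + b + c :=
  infinite_set_avoiding_thickened_lines_general d p hd
end

section
/- The two-dimensional mirror subshift is not sofic: there is no SFT Y over any finite alphabet and letter-to-letter projection π with π(Y) = X_mirror. -/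
/-- The two-dimensional mirror subshift: if two vertically adjacent 1's occur,
their whole column is filled with 1's; at most one column is filled; and the two
sides of a filled column are mirror images of each other. -/
def mirrorShift : Set (ℤ × ℤ → Bool) :=
  {x | (∀ c j : ℤ, x (c, j) = true → x (c, j + 1) = true → ∀ j' : ℤ, x (c, j') = true) ∧
       (∀ c c' : ℤ, (∀ j : ℤ, x (c, j) = true) → (∀ j : ℤ, x (c', j) = true) → c = c') ∧
       (∀ c : ℤ, (∀ j : ℤ, x (c, j) = true) →
          ∀ k : ℤ, 1 ≤ k → ∀ j : ℤ, x (c - k, j) = x (c + k, j))}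

/-!
Suppose `π(Y) = X_mirror` for an SFT `Y` with `n × n` windows over an alphabet of size `a`.
Place the mirror column at `0` and, on its left, an arbitrary `m × m` pattern on even rows
(so no two `1`s are vertically adjacent), mirrored on the right. Each of these `2^(m²)`
configurations has a lift in `Y`, while a lift restricted to the width-`n` collar of an
`m × 2m` box containing the left pattern takes at most `a^(6nm)` values. For `m > 6na` two
different patterns `f ≠ g` have lifts agreeing on the collar, so pasting the box of the lift
of `g` into the lift of `f` is again a point of `Y`. Its image has the mirror column at `0`,
the pattern `g` on the left and `f` on the right, which is impossible.
-/

namespace MirrorShift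

section Windows

variable {A : Type*} {n : ℕ}

def cell (v : ℤ × ℤ) (u : Fin n × Fin n) : ℤ × ℤ := (v.1 + u.1, v.2 + u.2)

def windowSFT (n : ℕ) (Allowed : Set (Fin n × Fin n → A)) : Set (ℤ × ℤ → A) :=
  {y | ∀ v : ℤ × ℤ, (fun u => y (cell v u)) ∈ Allowed}

theorem piecewise_mem_windowSFT {Allowed : Set (Fin n × Fin n → A)} {y y' : ℤ × ℤ → A}
    (hy : y ∈ windowSFT n Allowed) (hy' : y' ∈ windowSFT n Allowed)
    (S : Set (ℤ × ℤ)) [∀ p, Decidable (p ∈ S)]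
    (hagree : ∀ (v : ℤ × ℤ) (u u' : Fin n × Fin n),
      cell v u ∈ S → cell v u' ∉ S → y' (cell v u) = y (cell v u)) :
    S.piecewise y' y ∈ windowSFT n Allowed := by
  intro v
  by_cases hinside : ∀ u : Fin n × Fin n, cell v u ∈ S
  · simpa only [Set.piecewise_eq_of_mem _ _ _ (hinside _)] using hy' v
  · obtain ⟨u', hu'⟩ := not_forall.mp hinside
    convert hy v using 1
    funext u
    by_cases hu : cell v u ∈ S
    · rw [Set.piecewise_eq_of_mem _ _ _ hu, hagree v u u' hu hu']
    · rw [Set.piecewise_eq_of_notMem _ _ _ hu]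

end Windows

noncomputable def box (a b : ℤ) (w h : ℕ) : Finset (ℤ × ℤ) :=
  Finset.Ico a (a + w) ×ˢ Finset.Ico b (b + h)

/-- Contains every cell of `box a b w h` within distance `n` of its complement; when `n`
exceeds a side, its strips stick out of the box. -/
noncomputable def collar (n : ℕ) (a b : ℤ) (w h : ℕ) : Finset (ℤ × ℤ) :=
  box a b n h ∪ box (a + w - n) b n h ∪ box a b w n ∪ box a (b + h - n) w n

theorem card_box (a b : ℤ) (w h : ℕ) : (box a b w h).card = w * h := by
  simp [box, Finset.card_product, Int.card_Ico]

theorem card_collar_le (n : ℕ) (a b : ℤ) (w h : ℕ) :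
    (collar n a b w h).card ≤ 2 * n * (w + h) := by
  refine (Finset.card_union_le _ _).trans ?_
  grw [Finset.card_union_le, Finset.card_union_le]
  simp only [card_box]
  linarith

theorem fst_lt_of_mem_box {a b : ℤ} {w h : ℕ} {p : ℤ × ℤ} (hp : p ∈ box a b w h) :
    p.1 < a + w :=
  (Finset.mem_Ico.mp (Finset.mem_product.mp hp).1).2

theorem mem_collar_of_window {n : ℕ} {a b : ℤ} {w h : ℕ} {v : ℤ × ℤ}
    {u u' : Fin n × Fin n} (hu : cell v u ∈ box a b w h) (hu' : cell v u' ∉ box a b w h) :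
    cell v u ∈ collar n a b w h := by
  simp only [collar, box, cell, Finset.mem_union, Finset.mem_product, Finset.mem_Ico] at hu hu' ⊢
  have := u.1.isLt; have := u.2.isLt; have := u'.1.isLt; have := u'.2.isLt
  omega

theorem pow_lt_two_pow_mul_self {a k c m : ℕ} (hk : k ≤ c * m) (hm : c * a < m) :
    a ^ k < 2 ^ (m * m) :=
  calc a ^ k ≤ (2 ^ a) ^ k := Nat.pow_le_pow_left Nat.lt_two_pow_self.le k
    _ = 2 ^ (a * k) := by rw [← pow_mul]
    _ < 2 ^ (m * m) := by
      apply Nat.pow_lt_pow_right one_lt_two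
      calc a * k ≤ a * (c * m) := Nat.mul_le_mul_left a hk
        _ = c * a * m := by ring
        _ < m * m := Nat.mul_lt_mul_of_pos_right hm (by omega)

def mirrorExtend (x : ℤ × ℤ → Bool) : ℤ × ℤ → Bool :=
  fun p => decide (p.1 = 0) || x (-|p.1|, p.2)

theorem mirrorExtend_of_neg (x : ℤ × ℤ → Bool) {p : ℤ × ℤ} (hp : p.1 < 0) :
    mirrorExtend x p = x p := by
  simp [mirrorExtend, hp.ne, abs_of_neg hp]

theorem eq_zero_of_mirrorExtend_adjacent {x : ℤ × ℤ → Bool}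
    (hx : ∀ c r, x (c, r) = true → x (c, r + 1) = false) {c r : ℤ}
    (h₁ : mirrorExtend x (c, r) = true) (h₂ : mirrorExtend x (c, r + 1) = true) : c = 0 := by
  by_contra hc
  simp only [mirrorExtend, hc, decide_false, Bool.false_or] at h₁ h₂
  simp [hx _ _ h₁] at h₂

theorem mirrorExtend_mem_mirrorShift {x : ℤ × ℤ → Bool}
    (hx : ∀ c r, x (c, r) = true → x (c, r + 1) = false) :
    mirrorExtend x ∈ mirrorShift := by
  have hfull : ∀ c, (∀ r, mirrorExtend x (c, r) = true) → c = 0 := fun c hc =>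
    eq_zero_of_mirrorExtend_adjacent hx (hc 0) (hc 1)
  refine ⟨fun c r h₁ h₂ r' => ?_, fun c c' hc hc' => ?_, fun c hc k _ r => ?_⟩
  · simp [mirrorExtend, eq_zero_of_mirrorExtend_adjacent hx h₁ h₂]
  · rw [hfull c hc, hfull c' hc']
  · simp [mirrorExtend, hfull c hc, abs_neg]

theorem eqOn_of_piecewise_mem_mirrorShift {x x' : ℤ × ℤ → Bool} (hx' : x' ∈ mirrorShift)
    (hcol : ∀ r, x' (0, r) = true) {S : Set (ℤ × ℤ)} [∀ p, Decidable (p ∈ S)]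
    (hS : ∀ p ∈ S, p.1 < 0) (h : S.piecewise x x' ∈ mirrorShift) : Set.EqOn x x' S := by
  rintro ⟨c, r⟩ hp
  have hc := hS _ hp
  have hpos : ∀ c', 0 ≤ c' → (c', r) ∉ S := fun c' hc' hS' => (hc'.trans_lt (hS _ hS')).false
  have hcol' : ∀ r', S.piecewise x x' (0, r') = true := fun r' => by
    rw [Set.piecewise_eq_of_notMem _ _ _ fun h0 => (hS _ h0).false, hcol]
  have hk : 1 ≤ -c := by omega
  have hmirror := h.2.2 0 hcol' (-c) hk r
  have hmirror' := hx'.2.2 0 hcol (-c) hk r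
  rw [zero_sub, neg_neg, zero_add] at hmirror hmirror'
  rwa [Set.piecewise_eq_of_mem _ _ _ hp, Set.piecewise_eq_of_notMem _ _ _ (hpos _ (by omega)),
    ← hmirror'] at hmirror

def gridPoint (m : ℕ) (ij : Fin m × Fin m) : ℤ × ℤ := (-(ij.1 + 1 : ℤ), 2 * ij.2)

theorem gridPoint_injective (m : ℕ) : Function.Injective (gridPoint m) := by
  rintro ⟨i, j⟩ ⟨i', j'⟩ h
  obtain ⟨hi, hj⟩ := Prod.mk.inj h
  ext <;> dsimp only at hi hj ⊢ <;> omega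

theorem gridPoint_mem_box {m : ℕ} (ij : Fin m × Fin m) :
    gridPoint m ij ∈ box (-m) 0 m (2 * m) := by
  simp only [gridPoint, box, Finset.mem_product, Finset.mem_Ico]
  have := ij.1.isLt; have := ij.2.isLt
  omega

noncomputable def mirrorGrid {m : ℕ} (f : Fin m × Fin m → Bool) : ℤ × ℤ → Bool :=
  mirrorExtend (Function.extend (gridPoint m) f fun _ => false)

theorem mirrorGrid_mem_mirrorShift {m : ℕ} (f : Fin m × Fin m → Bool) :
    mirrorGrid f ∈ mirrorShift := by
  refine mirrorExtend_mem_mirrorShift fun c r h => ?_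
  obtain ⟨ij, hij⟩ : ∃ ij, gridPoint m ij = (c, r) := by
    by_contra hr
    simp [Function.extend_apply' _ _ _ hr] at h
  refine Function.extend_apply' _ _ _ ?_
  rintro ⟨ij', hij'⟩
  simp only [gridPoint, Prod.mk.injEq] at hij hij'
  omega

theorem mirrorGrid_gridPoint {m : ℕ} (f : Fin m × Fin m → Bool) (ij : Fin m × Fin m) :
    mirrorGrid f (gridPoint m ij) = f ij := by
  rw [mirrorGrid, mirrorExtend_of_neg _ (by simp only [gridPoint]; omega),
    (gridPoint_injective m).extend_apply]

theorem mirrorGrid_zero {m : ℕ} (f : Fin m × Fin m → Bool) (r : ℤ) :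
    mirrorGrid f (0, r) = true := by
  simp [mirrorGrid, mirrorExtend]

end MirrorShift

open MirrorShift

/-- The two-dimensional mirror subshift is not sofic: it is not the
letter-to-letter projection of any SFT (given by a finite alphabet and a set of
allowed n×n patterns). -/
theorem mirror_not_sofic :
    ¬ ∃ (A : Type) (_ : Fintype A) (n : ℕ) (Allowed : Set ((Fin n × Fin n) → A))
        (π : A → Bool),
      mirrorShift = (fun y : ℤ × ℤ → A => fun v => π (y v)) ''
        {y : ℤ × ℤ → A | ∀ v : ℤ × ℤ,
          (fun u : Fin n × Fin n => y (v.1 + (u.1 : ℤ), v.2 + (u.2 : ℤ))) ∈ Allowed} := by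
  classical
  rintro ⟨A, _, n, Allowed, π, hX⟩
  set m := 6 * n * Fintype.card A + 1
  have hlift (f : Fin m × Fin m → Bool) : ∃ y ∈ windowSFT n Allowed, π ∘ y = mirrorGrid f := by
    have := mirrorGrid_mem_mirrorShift f
    rwa [hX] at this
  choose Y hY hπY using hlift
  have hcard : Fintype.card (collar n (-m) 0 m (2 * m) → A) <
      Fintype.card (Fin m × Fin m → Bool) := by
    simp only [Fintype.card_fun, Fintype.card_coe, Fintype.card_bool, Fintype.card_prod,
      Fintype.card_fin]
    exact pow_lt_two_pow_mul_self (c := 6 * n) ((card_collar_le _ _ _ _ _).trans_eq (by ring))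
      (by omega)
  obtain ⟨f, g, hfg, hcollar⟩ := Fintype.exists_ne_map_eq_of_card_lt
    (fun f (p : collar n (-m) 0 m (2 * m)) => Y f p) hcard
  set B : Set (ℤ × ℤ) := ↑(box (-m) 0 m (2 * m))
  have hglued : B.piecewise (Y g) (Y f) ∈ windowSFT n Allowed :=
    piecewise_mem_windowSFT (hY f) (hY g) B fun v u u' hu hu' =>
      (congrFun hcollar ⟨_, mem_collar_of_window hu hu'⟩).symm
  have hmem : B.piecewise (mirrorGrid g) (mirrorGrid f) ∈ mirrorShift := by
    rw [← hπY, ← hπY, hX]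
    exact ⟨_, hglued, funext fun p => Set.apply_piecewise _ _ _ fun _ => π⟩
  have hleft : Set.EqOn (mirrorGrid g) (mirrorGrid f) B :=
    eqOn_of_piecewise_mem_mirrorShift (mirrorGrid_mem_mirrorShift f) (mirrorGrid_zero f)
      (fun p hp => (fst_lt_of_mem_box hp).trans_eq (neg_add_cancel _)) hmem
  exact hfg (funext fun ij => by
    simpa only [mirrorGrid_gridPoint] using (hleft (gridPoint_mem_box ij)).symm)
end

section
/- If L ⊆ ℕ is recursively enumerable, then the one-dimensional subshift X_L ⊆ {0,1}^ℤ consisting of configurations with at most two 1's such that, if exactly two 1's occur at distance n, then n ∉ { 2^m : m ∈ L }, is a Π⁰₁ subshift; moreover, if L is RE-complete then the language of patterns not occurring in X_L is co-RE-complete. -/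
/-- A finite one-dimensional pattern over `{0,1}`, encoded as a list of
(coordinate, symbol) pairs, occurs in `x` at `v`. -/
def patOccursAt1 (P : List (ℤ × Bool)) (v : ℤ) (x : ℤ → Bool) : Prop :=
  ∀ p ∈ P, x (v + p.1) = p.2

/-- The subshift `X_L`: configurations with at most two 1's such that if two 1's
occur at distance `n`, then `n ≠ 2^m` for all `m ∈ L`. -/
def XL (L : ℕ → Prop) : Set (ℤ → Bool) :=
  {x | (∀ s : Finset ℤ, (∀ i ∈ s, x i = true) → s.card ≤ 2) ∧
       ∀ i j : ℤ, i < j → x i = true → x j = true → ∀ m : ℕ, L m → j - i ≠ 2 ^ m}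

/-!
A pattern fails to occur in `X_L` exactly when it is inconsistent (it assigns both symbols to
one cell) or its set of `1`s already violates the condition defining `X_L`: it contains three
`1`s, or two `1`s at distance `2 ^ m` with `m ∈ L`. Every violation in a configuration is
witnessed by at most three cells, so `X_L` is the subshift defined by these forbidden patterns.
They form an RE set, since being forbidden is witnessed by a few cells and possibly some
`m ∈ L`, and the conditions on the cells are primitive recursive. The pattern
with `1`s at `0` and `2 ^ m` is forbidden iff `m ∈ L`, which reduces `L` to the forbidden
patterns.
-/

open Encodable Nat.Partrec.Code

theorem Part.assert_dom {γ : Type*} {p : Prop} {f : p → Part γ} :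
    (Part.assert p f).Dom ↔ ∃ h : p, (f h).Dom :=
  Iff.rfl

section Computability

open Primrec

variable {α β : Type*} [Primcodable α] [Primcodable β]

theorem PrimrecPred.rePred {p : α → Prop} (hp : PrimrecPred p) : REPred p :=
  hp.computablePred.to_re

theorem REPred.or {p q : α → Prop} (hp : REPred p) (hq : REPred q) :
    REPred fun a => p a ∨ q a := by
  obtain ⟨k, hk, H⟩ := Partrec.merge' hp hq
  exact hk.dom_re.of_eq fun a => by simpa [Part.assert_dom] using (H a).2

theorem REPred.and {p q : α → Prop} (hp : REPred p) (hq : REPred q) :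
    REPred fun a => p a ∧ q a :=
  (hp.bind (hq.comp Computable.fst).to₂).dom_re.of_eq fun a => by simp [Part.assert_dom]

theorem REPred.exists {q : α × β → Prop} (hq : REPred q) :
    REPred fun a => ∃ b, q (a, b) := by
  obtain ⟨c, hc⟩ := exists_code.1 hq
  have hdom : ∀ a b, (eval c (encode (a, b))).Dom ↔ q (a, b) := fun a b => by
    simp [hc, encodek, Part.assert_dom]
  -- Dovetailing: the search index `k` encodes a step bound and the code of a witness.
  let search (a : α) (k : ℕ) : Option ℕ :=
    (decode (α := β) k.unpair.2).bind fun b => evaln k.unpair.1 c (encode (a, b))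
  have hsearch : Primrec₂ search :=
    option_bind (Primrec.decode.comp (snd.comp (unpair.comp snd)))
      (primrec_evaln.comp (((fst.comp (unpair.comp (snd.comp fst))).pair (const c)).pair
        (Primrec.encode.comp ((fst.comp fst).pair snd)))).to₂
  refine (Partrec.rfindOpt hsearch.to_comp).dom_re.of_eq fun a => ?_
  rw [Nat.rfindOpt_dom]
  constructor
  · rintro ⟨k, x, hx⟩
    simp only [search, Option.mem_def, Option.bind_eq_some_iff] at hx
    obtain ⟨b, -, hb⟩ := hx
    exact ⟨b, (hdom a b).1 (Part.dom_iff_mem.2 ⟨x, evaln_sound hb⟩)⟩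
  · rintro ⟨b, hb⟩
    obtain ⟨x, hx⟩ := Part.dom_iff_mem.1 ((hdom a b).2 hb)
    obtain ⟨s, hs⟩ := evaln_complete.1 hx
    exact ⟨Nat.pair s (encode b), x, by simpa [search] using hs⟩

theorem Primrec.list_mem : PrimrecRel fun (a : α) (l : List α) => a ∈ l :=
  (PrimrecRel.exists_mem_list Primrec.eq).swap.of_eq fun a l => by simp

theorem Primrec.nat_pow : Primrec₂ ((· ^ ·) : ℕ → ℕ → ℕ) :=
  Primrec₂.unpaired'.1 Nat.Primrec.pow

theorem Primrec.int_equivNatSumNat : Primrec Equiv.intEquivNatSumNat :=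
  encode_iff.1 <| Primrec.encode.of_eq fun z => by cases z <;> rfl

theorem Primrec.int_natCast : Primrec (Nat.cast : ℕ → ℤ) :=
  encode_iff.1 <| (nat_mul.comp (const 2) Primrec.id).of_eq fun _ => rfl

theorem Primrec.int_negSucc : Primrec Int.negSucc :=
  encode_iff.1 <| (succ.comp (nat_mul.comp (const 2) Primrec.id)).of_eq fun _ => rfl

theorem Primrec.int_toNat : Primrec Int.toNat :=
  (sumCasesOn int_equivNatSumNat Primrec₂.right (const 0).to₂).of_eq fun z => by
    cases z <;> rfl

theorem Primrec.int_neg_toNat : Primrec fun z : ℤ => (-z).toNat :=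
  (sumCasesOn int_equivNatSumNat (const 0).to₂ (succ.comp snd).to₂).of_eq fun z => by
    rcases z with (_ | n) | n <;> rfl

theorem Primrec.int_subNatNat : Primrec₂ Int.subNatNat :=
  (nat_casesOn (nat_sub.comp snd fst) (int_natCast.comp (nat_sub.comp fst snd))
    (int_negSucc.comp snd).to₂).of_eq fun ⟨m, n⟩ => by
    simp only [Int.subNatNat]; cases n - m <;> rfl

-- `a - b = (a⁺ + b⁻) - (a⁻ + b⁺)`, a difference of naturals.
theorem Primrec.int_sub : Primrec₂ ((· - ·) : ℤ → ℤ → ℤ) :=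
  (int_subNatNat.comp (nat_add.comp (int_toNat.comp fst) (int_neg_toNat.comp snd))
    (nat_add.comp (int_neg_toNat.comp fst) (int_toNat.comp snd))).of_eq fun ⟨a, b⟩ => by
    dsimp only; rw [Int.subNatNat_eq_coe]; omega

theorem Primrec.int_two_pow : Primrec fun m : ℕ => (2 : ℤ) ^ m :=
  (int_natCast.comp (nat_pow.comp (const 2) Primrec.id)).of_eq fun m => by push_cast; rfl

end Computability

def HasThreePoints (S : Set ℤ) : Prop :=
  ∃ a ∈ S, ∃ b ∈ S, ∃ c ∈ S, a ≠ b ∧ a ≠ c ∧ b ≠ c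

def HasPointsAtDist (S : Set ℤ) (n : ℤ) : Prop :=
  ∃ i ∈ S, ∃ j ∈ S, j - i = n

def Admissible (L : ℕ → Prop) (S : Set ℤ) : Prop :=
  ¬ HasThreePoints S ∧ ∀ m, L m → ¬ HasPointsAtDist S (2 ^ m)

section Admissible

variable {L : ℕ → Prop} {S T : Set ℤ}

theorem HasThreePoints.translate (h : HasThreePoints S) (v : ℤ) (hST : ∀ i ∈ S, v + i ∈ T) :
    HasThreePoints T := by
  obtain ⟨a, ha, b, hb, c, hc, hab, hac, hbc⟩ := h
  exact ⟨v + a, hST a ha, v + b, hST b hb, v + c, hST c hc, by omega, by omega, by omega⟩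

theorem HasPointsAtDist.translate {n : ℤ} (h : HasPointsAtDist S n) (v : ℤ)
    (hST : ∀ i ∈ S, v + i ∈ T) : HasPointsAtDist T n := by
  obtain ⟨i, hi, j, hj, hij⟩ := h
  exact ⟨v + i, hST i hi, v + j, hST j hj, by omega⟩

theorem Admissible.of_translate (h : Admissible L T) (v : ℤ) (hST : ∀ i ∈ S, v + i ∈ T) :
    Admissible L S :=
  ⟨fun h3 => h.1 (h3.translate v hST), fun m hm hd => h.2 m hm (hd.translate v hST)⟩

theorem not_admissible_iff :
    ¬ Admissible L S ↔ HasThreePoints S ∨ ∃ m, L m ∧ HasPointsAtDist S (2 ^ m) := by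
  simp only [Admissible, not_and_or, not_not, not_forall, exists_prop]

theorem exists_list_not_admissible (h : ¬ Admissible L S) :
    ∃ l : List ℤ, (∀ i ∈ l, i ∈ S) ∧ ¬ Admissible L {i | i ∈ l} := by
  rcases not_admissible_iff.1 h with
    ⟨a, ha, b, hb, c, hc, hab, hac, hbc⟩ | ⟨m, hm, i, hi, j, hj, hij⟩
  · refine ⟨[a, b, c], by simp [ha, hb, hc], not_admissible_iff.2 (Or.inl ?_)⟩
    exact ⟨a, by simp, b, by simp, c, by simp, hab, hac, hbc⟩
  · exact ⟨[i, j], by simp [hi, hj],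
      not_admissible_iff.2 (Or.inr ⟨m, hm, i, by simp, j, by simp, hij⟩)⟩

theorem admissible_zero_two_pow_iff (m : ℕ) : Admissible L {0, 2 ^ m} ↔ ¬ L m := by
  have hpos : (0 : ℤ) < 2 ^ m := by positivity
  rw [← not_iff_not, not_not, not_admissible_iff]
  constructor
  · rintro (⟨a, ha, b, hb, c, hc, hab, hac, hbc⟩ | ⟨k, hk, i, hi, j, hj, hij⟩)
    · simp only [Set.mem_insert_iff, Set.mem_singleton_iff] at ha hb hc
      omega
    · simp only [Set.mem_insert_iff, Set.mem_singleton_iff] at hi hj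
      have hk' : (0 : ℤ) < 2 ^ k := by positivity
      rcases hi with rfl | rfl <;> rcases hj with rfl | rfl
      · omega
      · rw [sub_zero] at hij
        exact pow_right_injective₀ two_pos (by norm_num) hij ▸ hk
      all_goals omega
  · intro hm
    exact Or.inr ⟨m, hm, 0, by simp, 2 ^ m, by simp, sub_zero _⟩

theorem mem_XL_iff {x : ℤ → Bool} : x ∈ XL L ↔ Admissible L {i | x i = true} := by
  constructor
  · rintro ⟨hcard, hdist⟩
    refine ⟨fun ⟨a, ha, b, hb, c, hc, hab, hac, hbc⟩ => ?_,
      fun m hm ⟨i, hi, j, hj, hij⟩ => ?_⟩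
    · have h3 := hcard {a, b, c} (by simp_all)
      rw [Finset.card_eq_three.2 ⟨a, b, c, hab, hac, hbc, rfl⟩] at h3
      omega
    · have : (0 : ℤ) < 2 ^ m := by positivity
      exact hdist i j (by omega) hi hj m hm hij
  · rintro ⟨h3, hdist⟩
    refine ⟨fun s hs => ?_, fun i j _ hi hj m hm hij => hdist m hm ⟨i, hi, j, hj, hij⟩⟩
    by_contra hlt
    obtain ⟨a, ha, b, hb, c, hc, hab, hac, hbc⟩ := Finset.two_lt_card.1 (not_le.1 hlt)
    exact h3 ⟨a, hs a ha, b, hs b hb, c, hs c hc, hab, hac, hbc⟩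

end Admissible

def onesOf (P : List (ℤ × Bool)) : Set ℤ :=
  {i | (i, true) ∈ P}

def IsInconsistent (P : List (ℤ × Bool)) : Prop :=
  ∃ i, (i, true) ∈ P ∧ (i, false) ∈ P

def IsForbidden (L : ℕ → Prop) (P : List (ℤ × Bool)) : Prop :=
  IsInconsistent P ∨ ¬ Admissible L (onesOf P)

section Patterns

variable {L : ℕ → Prop} {P : List (ℤ × Bool)}

theorem not_patOccursAt1_of_isForbidden (h : IsForbidden L P) {x : ℤ → Bool} (hx : x ∈ XL L)
    (v : ℤ) : ¬ patOccursAt1 P v x := by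
  intro hocc
  rcases h with ⟨i, hi, hi'⟩ | hP
  · exact Bool.noConfusion ((hocc (i, true) hi).symm.trans (hocc (i, false) hi'))
  · exact hP ((mem_XL_iff.1 hx).of_translate v fun i hi => hocc _ hi)

theorem exists_patOccursAt1_of_not_isForbidden (h : ¬ IsForbidden L P) :
    ∃ x ∈ XL L, patOccursAt1 P 0 x := by
  simp only [IsForbidden, not_or] at h
  obtain ⟨hcons, hadm⟩ := h
  refine ⟨fun i => decide ((i, true) ∈ P), mem_XL_iff.2 (by simpa [onesOf] using hadm), ?_⟩
  rintro ⟨i, b⟩ hp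
  cases b
  · exact decide_eq_false fun hi => hcons ⟨i, by simpa using hi, hp⟩
  · simpa using hp

theorem isForbidden_iff_forall_not_patOccursAt1 :
    IsForbidden L P ↔ ∀ x ∈ XL L, ∀ v : ℤ, ¬ patOccursAt1 P v x :=
  ⟨fun h _ hx v => not_patOccursAt1_of_isForbidden h hx v, fun h => by_contra fun hP =>
    let ⟨x, hx, hocc⟩ := exists_patOccursAt1_of_not_isForbidden hP
    h x hx 0 hocc⟩

theorem XL_eq_setOf_forall_isForbidden (L : ℕ → Prop) :
    XL L = {x | ∀ P, IsForbidden L P → ∀ v : ℤ, ¬ patOccursAt1 P v x} := by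
  ext x
  refine ⟨fun hx P hP v => not_patOccursAt1_of_isForbidden hP hx v, fun hx => ?_⟩
  by_contra hxL
  obtain ⟨l, hl, hadm⟩ := exists_list_not_admissible (mem_XL_iff.not.1 hxL)
  refine hx (l.map (·, true)) (Or.inr (by simpa [onesOf] using hadm)) 0 ?_
  simpa [patOccursAt1] using hl

theorem isForbidden_zero_two_pow_iff (m : ℕ) :
    IsForbidden L [(0, true), (2 ^ m, true)] ↔ L m := by
  have hones : onesOf [((0 : ℤ), true), (2 ^ m, true)] = {0, 2 ^ m} := by
    ext i; simp [onesOf]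
  simp [IsForbidden, IsInconsistent, hones, admissible_zero_two_pow_iff]

end Patterns

section RE

open Primrec

theorem primrecRel_mem_onesOf :
    PrimrecRel fun (P : List (ℤ × Bool)) (i : ℤ) => i ∈ onesOf P :=
  list_mem.comp (snd.pair (const true)) fst

theorem rePred_isInconsistent : REPred IsInconsistent :=
  REPred.exists (q := fun x => (x.2, true) ∈ x.1 ∧ (x.2, false) ∈ x.1)
    (primrecRel_mem_onesOf.and (list_mem.comp (snd.pair (const false)) fst)).rePred

theorem rePred_hasThreePoints_onesOf : REPred fun P => HasThreePoints (onesOf P) := by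
  have a : Primrec fun x : List (ℤ × Bool) × ℤ × ℤ × ℤ => x.2.1 :=
    fst.comp snd
  have b : Primrec fun x : List (ℤ × Bool) × ℤ × ℤ × ℤ => x.2.2.1 :=
    fst.comp (snd.comp snd)
  have c : Primrec fun x : List (ℤ × Bool) × ℤ × ℤ × ℤ => x.2.2.2 :=
    snd.comp (snd.comp snd)
  have mem {f : List (ℤ × Bool) × ℤ × ℤ × ℤ → ℤ} (hf : Primrec f) :
      PrimrecPred fun x => f x ∈ onesOf x.1 :=
    primrecRel_mem_onesOf.comp fst hf
  have ne {f g : List (ℤ × Bool) × ℤ × ℤ × ℤ → ℤ} (hf : Primrec f)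
      (hg : Primrec g) : PrimrecPred fun x => f x ≠ g x :=
    (Primrec.eq.comp hf hg).not
  refine (REPred.exists ((mem a).and <| (mem b).and <| (mem c).and <|
    (ne a b).and <| (ne a c).and (ne b c)).rePred).of_eq fun P => ?_
  simp [HasThreePoints]

theorem rePred_exists_hasPointsAtDist_onesOf {L : ℕ → Prop} (hL : REPred L) :
    REPred fun P => ∃ m, L m ∧ HasPointsAtDist (onesOf P) (2 ^ m) := by
  have m : Primrec fun x : List (ℤ × Bool) × ℕ × ℤ × ℤ => x.2.1 :=
    fst.comp snd
  have i : Primrec fun x : List (ℤ × Bool) × ℕ × ℤ × ℤ => x.2.2.1 :=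
    fst.comp (snd.comp snd)
  have j : Primrec fun x : List (ℤ × Bool) × ℕ × ℤ × ℤ => x.2.2.2 :=
    snd.comp (snd.comp snd)
  have mem {f : List (ℤ × Bool) × ℕ × ℤ × ℤ → ℤ} (hf : Primrec f) :
      PrimrecPred fun x => f x ∈ onesOf x.1 :=
    primrecRel_mem_onesOf.comp fst hf
  have hLm : REPred fun x : List (ℤ × Bool) × ℕ × ℤ × ℤ => L x.2.1 := hL.comp m.to_comp
  refine (REPred.exists (hLm.and ((mem i).and <| (mem j).and <|
    Primrec.eq.comp (int_sub.comp j i) (int_two_pow.comp m)).rePred)).of_eq fun P => ?_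
  simp [HasPointsAtDist]

theorem rePred_isForbidden {L : ℕ → Prop} (hL : REPred L) : REPred (IsForbidden L) :=
  (rePred_isInconsistent.or (rePred_hasThreePoints_onesOf.or
    (rePred_exists_hasPointsAtDist_onesOf hL))).of_eq fun P => by
    rw [IsForbidden, not_admissible_iff]

end RE

/-- If `L` is recursively enumerable then `X_L` is a Π⁰₁ subshift (defined by an
RE set of forbidden patterns); moreover, if `L` is RE-complete, then the set of
patterns not occurring in `X_L` is RE (equivalently, the language of occurring
patterns is co-RE) and complete under many-one reductions: every RE set reduces
to the set of non-occurring patterns. -/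
theorem XL_Pi01_and_complete (L : ℕ → Prop) (hL : REPred L) :
    (∃ F : List (ℤ × Bool) → Prop, REPred F ∧
        XL L = {x | ∀ P, F P → ∀ v : ℤ, ¬ patOccursAt1 P v x}) ∧
    ((∀ L' : ℕ → Prop, REPred L' → L' ≤₀ L) →
      REPred (fun P : List (ℤ × Bool) => ∀ x ∈ XL L, ∀ v : ℤ, ¬ patOccursAt1 P v x) ∧
      ∀ L' : ℕ → Prop, REPred L' →
        L' ≤₀ (fun P : List (ℤ × Bool) => ∀ x ∈ XL L, ∀ v : ℤ, ¬ patOccursAt1 P v x)) := by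
  have hre := rePred_isForbidden hL
  refine ⟨⟨IsForbidden L, hre, XL_eq_setOf_forall_isForbidden L⟩, fun hcomplete =>
    ⟨hre.of_eq fun P => isForbidden_iff_forall_not_patOccursAt1, fun L' hL' => ?_⟩⟩
  have hpair : Primrec fun m : ℕ => [((0 : ℤ), true), ((2 : ℤ) ^ m, true)] :=
    Primrec.list_cons.comp (Primrec.const _)
      (Primrec.list_cons.comp (Primrec.int_two_pow.pair (Primrec.const true)) (Primrec.const []))
  exact (hcomplete L' hL').trans ⟨_, hpair.to_comp, fun m =>
    (isForbidden_zero_two_pow_iff m).symm.trans isForbidden_iff_forall_not_patOccursAt1⟩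
end

section
/- For all dimensions d ≥ 2, a deterministic one-head plane-walking automaton cannot define any nontrivial sparse subshift: if A is a 1PWDFA such that the 1-sunny-side-up shift X^d_1 is contained in S(A), then S(A) is not sparse (not contained in any X^d_n), i.e., there is a configuration with infinitely many 1's accepted by A. -/
/-- A deterministic one-head plane-walking finite automaton on `ℤ^d`. -/
structure OnePWDFA (d : ℕ) (α : Type) where
  Q : Type
  fin : Fintype Q
  δ : Q → α → Q × (Fin d → ℤ)
  I : Set Q
  R : Set Q

namespace OnePWDFA

variable {d : ℕ} {α : Type}

/-- One step of the run: read the symbol, update state, move the head. -/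
def step (A : OnePWDFA d α) (x : (Fin d → ℤ) → α) (c : A.Q × (Fin d → ℤ)) :
    A.Q × (Fin d → ℤ) :=
  ((A.δ c.1 (x c.2)).1, c.2 + (A.δ c.1 (x c.2)).2)

/-- The subshift of `A`: configurations on which no run, from any starting
coordinate and initial state, ever enters a rejecting state. -/
def S (A : OnePWDFA d α) : Set ((Fin d → ℤ) → α) :=
  {x | ∀ q ∈ A.I, ∀ v : Fin d → ℤ, ∀ n : ℕ, ((A.step x)^[n] (q, v)).1 ∉ A.R}

end OnePWDFA

namespace NoSparseAux

open OnePWDFA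

variable {d : ℕ} (A : OnePWDFA d Bool)

/-- the all-zero configuration -/
def zero : (Fin d → ℤ) → Bool := fun _ => false

/-- the configuration with a single 1 at `w` -/
noncomputable def one (w : Fin d → ℤ) : (Fin d → ℤ) → Bool :=
  fun p => if p = w then true else false

/-- the run on the all-zero configuration, started at the origin -/
def zr (q : A.Q) (n : ℕ) : A.Q × (Fin d → ℤ) := (A.step zero)^[n] (q, 0)

lemma zr_zero (q : A.Q) : zr A q 0 = (q, 0) := rfl

lemma step_zero (c : A.Q × (Fin d → ℤ)) :
    A.step zero c = ((A.δ c.1 false).1, c.2 + (A.δ c.1 false).2) := rfl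

lemma zr_succ (q : A.Q) (n : ℕ) :
    zr A q (n+1) = ((A.δ (zr A q n).1 false).1, (zr A q n).2 + (A.δ (zr A q n).1 false).2) := by
  rw [zr, Function.iterate_succ_apply']
  rfl

/-- number of states -/
def NQ : ℕ := @Fintype.card A.Q A.fin

/-- the set of single-step displacements, together with 0 -/
def smallVecs : Set (Fin d → ℤ) :=
  insert 0 (Set.range fun p : A.Q × Bool => (A.δ p.1 p.2).2)

lemma smallVecs_finite : (smallVecs A).Finite := by
  letI := A.fin
  exact (Set.finite_range _).insert _

lemma zero_mem_smallVecs : (0 : Fin d → ℤ) ∈ smallVecs A := Set.mem_insert _ _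
lemma zr_period_line (q : A.Q) :
    ∃ V : Fin d → ℤ, ∀ n : ℕ, ∃ r ≤ NQ A, ∃ k : ℤ,
      (zr A q n).2 = (zr A q r).2 + k • V := by
  letI := A.fin
  obtain ⟨i, j, hij, hfij⟩ :=
    Fintype.exists_ne_map_eq_of_card_lt (fun i : Fin (NQ A + 1) => (zr A q i).1)
      (by rw [Fintype.card_fin]; exact Nat.lt_succ_self _)
  -- order them
  obtain ⟨m, m', hmm', hmN, hst⟩ :
      ∃ m m' : ℕ, m < m' ∧ m' ≤ NQ A ∧ (zr A q m').1 = (zr A q m).1 := by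
    rcases lt_or_gt_of_ne hij with h | h
    · exact ⟨i, j, h, Nat.lt_succ_iff.mp j.isLt, hfij.symm⟩
    · exact ⟨j, i, h, Nat.lt_succ_iff.mp i.isLt, hfij⟩
  set V : Fin d → ℤ := (zr A q m').2 - (zr A q m).2 with hV
  set p : ℕ := m' - m with hp
  have hp0 : 0 < p := by omega
  have hC : ∀ jj : ℕ, zr A q (m + jj + p) = ((zr A q (m + jj)).1, (zr A q (m + jj)).2 + V) := by
    intro jj
    induction jj with
    | zero =>
      have : m + 0 + p = m' := by omega
      rw [this]
      refine Prod.ext hst ?_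
      simp [hV]
    | succ jj ih =>
      have h1 : m + (jj+1) + p = (m + jj + p) + 1 := by omega
      have h2 : m + (jj+1) = (m + jj) + 1 := by omega
      rw [h1, zr_succ, ih, h2, zr_succ]
      refine Prod.ext rfl ?_
      simp only
      abel
  refine ⟨V, fun n => ?_⟩
  induction n using Nat.strong_induction_on with
  | _ n IH =>
    by_cases hn : n < m'
    · exact ⟨n, by omega, 0, by simp⟩
    · have hge : m' ≤ n := by omega
      have hsplit : n = m + (n - p - m) + p := by omega
      have hdec : n - p < n := by omega
      obtain ⟨r, hr, k, hk⟩ := IH (n - p) hdec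
      have hnp : m + (n - p - m) = n - p := by omega
      have key : (zr A q n).2 = (zr A q (n - p)).2 + V := by
        conv_lhs => rw [hsplit]
        rw [hC (n - p - m), hnp]
      refine ⟨r, hr, k + 1, ?_⟩
      rw [key, hk, add_smul, one_smul]
      abel

/-- the "parabola" map `t ↦ (t, t², 0, …, 0)` -/
def pb (d : ℕ) (t : ℕ) : Fin d → ℤ :=
  fun i => if (i : ℕ) = 0 then (t : ℤ) else if (i : ℕ) = 1 then (t : ℤ) * t else 0

lemma pb_apply0 (hd : 2 ≤ d) (t : ℕ) : pb d t ⟨0, by omega⟩ = (t : ℤ) := by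
  simp [pb]

lemma pb_apply1 (hd : 2 ≤ d) (t : ℕ) : pb d t ⟨1, by omega⟩ = (t : ℤ) * t := by
  simp [pb]

lemma pb_inj (hd : 2 ≤ d) : Function.Injective (pb d) := by
  intro a b h
  have := congrFun h ⟨0, by omega⟩
  rw [pb_apply0 hd, pb_apply0 hd] at this
  exact_mod_cast this

lemma line_finite (hd : 2 ≤ d) (a b : Fin d → ℤ) :
    {t : ℕ | ∃ k : ℤ, pb d t = a + k • b}.Finite := by
  set i0 : Fin d := ⟨0, by omega⟩
  set i1 : Fin d := ⟨1, by omega⟩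
  set S : Set ℕ := {t : ℕ | ∃ k : ℤ, pb d t = a + k • b} with hS
  have e0 : ∀ t ∈ S, ∃ k : ℤ, (t : ℤ) = a i0 + k * b i0 ∧ (t : ℤ) * t = a i1 + k * b i1 := by
    rintro t ⟨k, hk⟩
    refine ⟨k, ?_, ?_⟩
    · have := congrFun hk i0
      rw [pb_apply0 hd] at this
      simpa using this
    · have := congrFun hk i1
      rw [pb_apply1 hd] at this
      simpa using this
  by_cases hb : b i0 = 0
  · apply Set.Finite.subset (Set.finite_singleton (a i0).toNat)
    intro t ht
    obtain ⟨k, h0, _⟩ := e0 t ht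
    rw [hb, mul_zero, add_zero] at h0
    simp only [Set.mem_singleton_iff]
    omega
  · by_contra hfin
    have hinf : S.Infinite := hfin
    obtain ⟨t1, ht1⟩ := hinf.nonempty
    obtain ⟨t2, ht2, h12⟩ := hinf.exists_gt t1
    obtain ⟨t3, ht3, h23⟩ := hinf.exists_gt t2
    have key : ∀ t t' : ℕ, t ∈ S → t' ∈ S → t ≠ t' →
        b i1 = ((t : ℤ) + t') * b i0 := by
      intro t t' ht ht' htt
      obtain ⟨k, h0, h1⟩ := e0 t ht
      obtain ⟨k', h0', h1'⟩ := e0 t' ht'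
      have ht'' : ((t : ℤ) - a i0) * b i1 = ((t : ℤ) * t - a i1) * b i0 := by
        linear_combination b i1 * h0 - b i0 * h1
      have ht''' : ((t' : ℤ) - a i0) * b i1 = ((t' : ℤ) * t' - a i1) * b i0 := by
        linear_combination b i1 * h0' - b i0 * h1'
      have hcast : (t : ℤ) ≠ (t' : ℤ) := by exact_mod_cast htt
      have := mul_left_cancel₀ (sub_ne_zero.mpr hcast)
        (show ((t : ℤ) - t') * b i1 = ((t : ℤ) - t') * (((t : ℤ) + t') * b i0) by
          linear_combination ht'' - ht''')
      exact this
    have e1 := key t1 t2 ht1 ht2 (by omega)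
    have e2 := key t1 t3 ht1 ht3 (by omega)
    have : ((t1 : ℤ) + t2) * b i0 = ((t1 : ℤ) + t3) * b i0 := by rw [← e1, ← e2]
    have := mul_right_cancel₀ hb this
    omega

/-- the periodic direction vector of the zero-run from state `q` -/
noncomputable def lineVec (q : A.Q) : Fin d → ℤ := (zr_period_line A q).choose

lemma lineVec_spec (q : A.Q) : ∀ n : ℕ, ∃ r ≤ NQ A, ∃ k : ℤ,
    (zr A q n).2 = (zr A q r).2 + k • lineVec A q := (zr_period_line A q).choose_spec

/-- the set of "bad" parameters relative to the parameter `s`. -/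
def Bad (s : ℕ) : Set ℕ :=
  {t | ∃ u ∈ smallVecs A, ∃ q' : A.Q, ∃ r ≤ NQ A, ∃ k : ℤ,
      pb d t = pb d s + u + (zr A q' r).2 + k • lineVec A q'} ∪
  {t | ∃ u ∈ smallVecs A, ∃ q' : A.Q, ∃ r ≤ NQ A, ∃ k : ℤ,
      pb d s = pb d t + u + (zr A q' r).2 + k • lineVec A q'}

lemma bad_finite (hd : 2 ≤ d) (s : ℕ) : (Bad A s).Finite := by
  letI := A.fin
  apply Set.Finite.union
  · apply Set.Finite.subset
      (Set.Finite.biUnion (smallVecs_finite A) (fun u _ =>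
        Set.Finite.biUnion (Set.finite_univ (α := A.Q)) (fun q' _ =>
          Set.Finite.biUnion (Set.finite_Iic (NQ A)) (fun r _ =>
            line_finite hd (pb d s + u + (zr A q' r).2) (lineVec A q')))))
    rintro t ⟨u, hu, q', r, hr, k, h⟩
    exact Set.mem_biUnion hu (Set.mem_biUnion (Set.mem_univ q')
      (Set.mem_biUnion (Set.mem_Iic.mpr hr) ⟨k, h⟩))
  · apply Set.Finite.subset
      (Set.Finite.biUnion (smallVecs_finite A) (fun u _ =>
        Set.Finite.biUnion (Set.finite_univ (α := A.Q)) (fun q' _ =>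
          Set.Finite.biUnion (Set.finite_Iic (NQ A)) (fun r _ =>
            line_finite hd (pb d s - u - (zr A q' r).2) (lineVec A q')))))
    rintro t ⟨u, hu, q', r, hr, k, h⟩
    refine Set.mem_biUnion hu (Set.mem_biUnion (Set.mem_univ q')
      (Set.mem_biUnion (Set.mem_Iic.mpr hr) ⟨-k, ?_⟩))
    rw [neg_smul]
    rw [h]
    abel

lemma exists_pick (hd : 2 ≤ d) (l : List ℕ) : ∃ t : ℕ, ∀ s ∈ l, t ∉ Bad A s := by
  have hfin : (⋃ s ∈ {s | s ∈ l}, Bad A s).Finite :=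
    Set.Finite.biUnion (List.finite_toSet l) (fun s _ => bad_finite A hd s)
  obtain ⟨t, ht⟩ := hfin.infinite_compl.nonempty
  refine ⟨t, fun s hs hmem => ht ?_⟩
  exact Set.mem_biUnion hs hmem

noncomputable def pick (hd : 2 ≤ d) (l : List ℕ) : ℕ := (exists_pick A hd l).choose

lemma pick_spec (hd : 2 ≤ d) (l : List ℕ) : ∀ s ∈ l, pick A hd l ∉ Bad A s :=
  (exists_pick A hd l).choose_spec

/-- the accumulating list of chosen parameters -/
noncomputable def seqL (hd : 2 ≤ d) : ℕ → List ℕ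
  | 0 => []
  | n+1 => seqL hd n ++ [pick A hd (seqL hd n)]

/-- the chosen sequence of parameters -/
noncomputable def tseq (hd : 2 ≤ d) (n : ℕ) : ℕ := pick A hd (seqL A hd n)

lemma tseq_mem_seqL (hd : 2 ≤ d) : ∀ n m : ℕ, m < n → tseq A hd m ∈ seqL A hd n := by
  intro n
  induction n with
  | zero => omega
  | succ n ih =>
    intro m hm
    rw [seqL]
    rcases Nat.lt_or_ge m n with h | h
    · exact List.mem_append_left _ (ih m h)
    · have : m = n := by omega
      subst this
      exact List.mem_append_right _ (by simp [tseq])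

lemma tseq_avoid (hd : 2 ≤ d) {m n : ℕ} (h : m < n) :
    tseq A hd n ∉ Bad A (tseq A hd m) :=
  pick_spec A hd (seqL A hd n) _ (tseq_mem_seqL A hd n m h)

lemma agree (x y : (Fin d → ℤ) → Bool) (c : A.Q × (Fin d → ℤ)) :
    ∀ n : ℕ, (∀ m, m < n → y (((A.step x)^[m] c).2) = x (((A.step x)^[m] c).2)) →
      (A.step y)^[n] c = (A.step x)^[n] c := by
  intro n
  induction n with
  | zero => intro _; rfl
  | succ n ih =>
    intro h
    rw [Function.iterate_succ_apply', Function.iterate_succ_apply',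
      ih (fun m hm => h m (hm.trans (Nat.lt_succ_self n)))]
    have hy := h n (Nat.lt_succ_self n)
    simp [OnePWDFA.step, hy]

lemma erun (w : Fin d → ℤ) (q0 : A.Q) :
    ∀ n : ℕ, ∃ u ∈ smallVecs A, ∃ (q' : A.Q) (m : ℕ),
      (A.step (one w))^[n] (q0, w) = ((zr A q' m).1, w + u + (zr A q' m).2) := by
  intro n
  induction n with
  | zero =>
    refine ⟨0, zero_mem_smallVecs A, q0, 0, ?_⟩
    simp [zr_zero]
  | succ n ih =>
    obtain ⟨u, hu, q', m, hrep⟩ := ih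
    rw [Function.iterate_succ_apply', hrep]
    by_cases hpw : w + u + (zr A q' m).2 = w
    · refine ⟨(A.δ (zr A q' m).1 true).2,
        Set.mem_insert_iff.mpr (Or.inr ⟨((zr A q' m).1, true), rfl⟩),
        (A.δ (zr A q' m).1 true).1, 0, ?_⟩
      show (_, _) = _
      rw [zr_zero]
      simp only [OnePWDFA.step, one, hpw, if_pos rfl]
      simp
    · refine ⟨u, hu, q', m + 1, ?_⟩
      rw [zr_succ]
      simp only [OnePWDFA.step, one, if_neg hpw]
      refine Prod.ext rfl ?_
      simp only
      abel

end NoSparseAux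

open NoSparseAux

/-- For `d ≥ 2`, a one-head plane-walking automaton defines no nontrivial
sparse subshift: if `S(A)` contains the 1-sunny-side-up shift `X^d_1`, then
`A` accepts some configuration with infinitely many 1's, so `S(A)` is not
sparse. -/
theorem onePWDFA_no_nontrivial_sparse (d : ℕ) (hd : 2 ≤ d) (A : OnePWDFA d Bool)
    (h1 : {x : (Fin d → ℤ) → Bool | ∀ v w : Fin d → ℤ,
            x v = true → x w = true → v = w} ⊆ A.S) :
    ∃ x ∈ A.S, {v : Fin d → ℤ | x v = true}.Infinite := by
  classical
  by_cases hQ : Nonempty A.Q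
  swap
  · refine ⟨fun _ => true, ?_, ?_⟩
    · intro q hq v n
      exact absurd ⟨q⟩ hQ
    · apply Set.infinite_of_injective_forall_mem
        (f := fun n : ℕ => (fun _ => (n : ℤ) : Fin d → ℤ))
      · intro a b h
        have h2 : (a : ℤ) = (b : ℤ) := congrFun h ⟨0, by omega⟩
        exact_mod_cast h2
      · intro a
        simp
  obtain ⟨q₀⟩ := hQ
  set v : ℕ → (Fin d → ℤ) := fun i => pb d (tseq A hd i) with hv
  have htinj : Function.Injective (tseq A hd) := by
    intro i j hij
    by_contra hne
    have hbase : ∀ i' j' : ℕ, tseq A hd i' = tseq A hd j' → i' < j' → False := by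
      intro i' j' hij' hlt
      apply tseq_avoid A hd hlt
      refine Or.inl ⟨0, zero_mem_smallVecs A, q₀, 0, Nat.zero_le _, 0, ?_⟩
      rw [hij', zr_zero]
      simp
    rcases Nat.lt_or_ge i j with h | h
    · exact hbase i j hij h
    · exact hbase j i hij.symm (by omega)
  have hvinj : Function.Injective v := fun i j h => htinj (pb_inj hd h)
  set x : (Fin d → ℤ) → Bool := fun p => if ∃ i, p = v i then true else false with hxdef
  have hx : ∀ p, x p = true ↔ ∃ i, p = v i := by
    intro p
    by_cases h : ∃ i, p = v i <;> simp [hxdef, h]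
  refine ⟨x, ?_, ?_⟩
  · intro q hq s n
    by_cases hsee : ∃ m : ℕ, x (((A.step x)^[m]) (q, s)).2 = true
    · obtain ⟨n₀, hn₀spec, hn₀min⟩ :
        ∃ n₀ : ℕ, x (((A.step x)^[n₀]) (q, s)).2 = true ∧
          ∀ m, m < n₀ → ¬ x (((A.step x)^[m]) (q, s)).2 = true :=
        ⟨Nat.find hsee, Nat.find_spec hsee, fun m hm => Nat.find_min hsee hm⟩
      set w := (((A.step x)^[n₀]) (q, s)).2 with hw
      obtain ⟨i, hwi⟩ := (hx w).1 hn₀spec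
      have H : ∀ m : ℕ, x (((A.step (one w))^[m]) (q, s)).2
          = one w (((A.step (one w))^[m]) (q, s)).2 := by
        intro m
        induction m using Nat.strong_induction_on with
        | _ m IH =>
        have hagree : ∀ m', m' ≤ m →
            (A.step x)^[m'] (q, s) = (A.step (one w))^[m'] (q, s) := by
          intro m' hm'
          exact agree A (one w) x (q, s) m' (fun mm hmm => IH mm (lt_of_lt_of_le hmm hm'))
        rcases Nat.lt_or_ge m n₀ with hm | hm
        · have hxr := hagree m le_rfl
          have hxp : x (((A.step (one w))^[m] (q, s)).2) = false := by
            have h' := hn₀min m hm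
            rw [hxr] at h'
            simpa using h'
          have hpw : ((A.step (one w))^[m] (q, s)).2 ≠ w := by
            intro hcontra
            rw [hcontra] at hxp
            rw [hn₀spec] at hxp
            exact Bool.noConfusion hxp
          rw [hxp]
          simp [one, hpw]
        · have h0 : (A.step (one w))^[n₀] (q, s) = (A.step x)^[n₀] (q, s) :=
            (hagree n₀ hm).symm
          have hsplit : (A.step (one w))^[m] (q, s)
              = (A.step (one w))^[m - n₀] ((A.step (one w))^[n₀] (q, s)) := by
            conv_lhs => rw [show m = (m - n₀) + n₀ by omega, Function.iterate_add_apply]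
          have hpair : (A.step x)^[n₀] (q, s) = (((A.step x)^[n₀] (q, s)).1, w) := by
            rw [hw]
          obtain ⟨u, hu, q', mm, hrep⟩ := erun A w (((A.step x)^[n₀] (q, s)).1) (m - n₀)
          have hpos : ((A.step (one w))^[m] (q, s)).2 = w + u + (zr A q' mm).2 := by
            rw [hsplit, h0, hpair, hrep]
          obtain ⟨r, hr, k, hk⟩ := lineVec_spec A q' mm
          by_cases hpw : ((A.step (one w))^[m] (q, s)).2 = w
          · rw [hpw, hn₀spec]
            simp [one]
          · have hxp : x (((A.step (one w))^[m] (q, s)).2) = false := by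
              by_contra hx'
              have hx'' : x (((A.step (one w))^[m] (q, s)).2) = true := by
                revert hx'
                cases x (((A.step (one w))^[m] (q, s)).2) <;> simp
              obtain ⟨j, hj⟩ := (hx _).1 hx''
              have hij : i ≠ j := by
                intro hcontra
                apply hpw
                rw [hj, ← hcontra, ← hwi]
              have hvrel : v j = v i + u + ((zr A q' r).2 + k • lineVec A q') := by
                calc v j = w + u + (zr A q' mm).2 := by rw [← hj, hpos]
                _ = v i + u + ((zr A q' r).2 + k • lineVec A q') := by rw [hwi, hk]
              have hrel : pb d (tseq A hd j)
                  = pb d (tseq A hd i) + u + (zr A q' r).2 + k • lineVec A q' := by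
                have h' : pb d (tseq A hd j)
                    = pb d (tseq A hd i) + u + ((zr A q' r).2 + k • lineVec A q') := hvrel
                rw [h']
                abel
              rcases Nat.lt_or_ge i j with hij' | hij'
              · exact tseq_avoid A hd hij' (Or.inl ⟨u, hu, q', r, hr, k, hrel⟩)
              · exact tseq_avoid A hd (show j < i by omega)
                  (Or.inr ⟨u, hu, q', r, hr, k, hrel⟩)
            rw [hxp]
            simp [one, hpw]
      have hfin : (A.step x)^[n] (q, s) = (A.step (one w))^[n] (q, s) :=
        agree A (one w) x (q, s) n (fun m _ => H m)
      rw [hfin]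
      refine h1 ?_ q hq s n
      intro a b ha hb
      simp [one] at ha hb
      rw [ha, hb]
    · push_neg at hsee
      have hz : ∀ m, m < n →
          zero (((A.step x)^[m] (q, s)).2) = x (((A.step x)^[m] (q, s)).2) := by
        intro m _
        have h' := hsee m
        have : x (((A.step x)^[m] (q, s)).2) = false := by simpa using h'
        rw [this]
        rfl
      have := agree A x zero (q, s) n hz
      rw [← this]
      refine h1 ?_ q hq s n
      intro a b ha hb
      simp [zero] at ha
  · apply Set.infinite_of_injective_forall_mem (f := v) hvinj
    intro a
    exact (hx (v a)).2 ⟨a, rfl⟩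
end
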